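/- Denecessitation for IKC: for any type A, there exists an IKC term t : · ⊢ A (in the empty context) if and only if there exists an IKC term u : · ⊢ □A. -/
import Mathlib


namespace IKC

/-- Types of the Fitch-style calculus: base type ι, functions, box. -/
inductive Ty : Type
  | base : Ty
  | arr : Ty → Ty → Ty
  | box : Ty → Ty

/-- Typing contexts: empty, extension by a type, extension by a lock 🔒. -/
inductive Cx : Type
  | nil : Cx
  | snoc : Cx → Ty → Cx
  | lock : Cx → Cx

/-- IKC modal accessibility relation Δ ◁ Γ: Γ = Δ,🔒,Δ' with Δ' lock-free. -/
inductive Ext : Cx → Cx → Type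
  | nil : Ext Γ (.lock Γ)
  | var : Ext Δ Γ → Ext Δ (.snoc Γ A)

/-- De Bruijn variables (no rule through locks). -/
inductive Var : Cx → Ty → Type
  | zero : Var (.snoc Γ A) A
  | succ : Var Γ A → Var (.snoc Γ B) A

/-- Intrinsically-typed terms of IKC. -/
inductive Tm : Cx → Ty → Type
  | var : Var Γ A → Tm Γ A
  | lam : Tm (.snoc Γ A) B → Tm Γ (.arr A B)
  | app : Tm Γ (.arr A B) → Tm Γ A → Tm Γ B
  | box : Tm (.lock Γ) A → Tm Γ (.box A)
  | unbox : Tm Δ (.box A) → Ext Δ Γ → Tm Γ A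

/-! ### Weakenings -/

/-- Order-preserving embeddings between contexts (weakenings). -/
inductive W : Cx → Cx → Type
  | base : W .nil .nil
  | drop : W Γ Δ → W Γ (.snoc Δ A)
  | keep : W Γ Δ → W (.snoc Γ A) (.snoc Δ A)
  | lock : W Γ Δ → W (.lock Γ) (.lock Δ)

def idW : (Γ : Cx) → W Γ Γ
  | .nil => .base
  | .snoc Γ _ => .keep (idW Γ)
  | .lock Γ => .lock (idW Γ)

def compW : {Γ Δ Θ : Cx} → W Γ Δ → W Δ Θ → W Γ Θ
  | _, _, _, w, .base => w
  | _, _, _, w, .drop w' => .drop (compW w w')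
  | _, _, _, .drop w, .keep w' => .drop (compW w w')
  | _, _, _, .keep w, .keep w' => .keep (compW w w')
  | _, _, _, .lock w, .lock w' => .lock (compW w w')

def wkVar : {Γ Δ : Cx} → W Γ Δ → Var Γ A → Var Δ A
  | _, _, .drop w, x => .succ (wkVar w x)
  | _, _, .keep _, .zero => .zero
  | _, _, .keep w, .succ x => .succ (wkVar w x)

/-- Factorization of a weakening through a modal extension. -/
def factor : {Γ Δ Θ : Cx} → W Γ Δ → Ext Θ Γ → (Θ' : Cx) × W Θ Θ' × Ext Θ' Δ
  | _, _, _, .drop w, e =>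
      let ⟨Θ', w', e'⟩ := factor w e; ⟨Θ', w', .var e'⟩
  | _, _, _, .keep w, .var e =>
      let ⟨Θ', w', e'⟩ := factor w e; ⟨Θ', w', .var e'⟩
  | _, _, _, .lock w, .nil => ⟨_, w, .nil⟩

/-! ### Normal and neutral forms -/

mutual
inductive Nf : Cx → Ty → Type
  | ne : Ne Γ .base → Nf Γ .base
  | lam : Nf (.snoc Γ A) B → Nf Γ (.arr A B)
  | box : Nf (.lock Γ) A → Nf Γ (.box A)

inductive Ne : Cx → Ty → Type
  | var : Var Γ A → Ne Γ A
  | app : Ne Γ (.arr A B) → Nf Γ A → Ne Γ B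
  | unbox : Ne Δ (.box A) → Ext Δ Γ → Ne Γ A
end

mutual
def Nf.toTm : Nf Γ A → Tm Γ A
  | .ne n => n.toTm
  | .lam n => .lam n.toTm
  | .box n => .box n.toTm

def Ne.toTm : Ne Γ A → Tm Γ A
  | .var x => .var x
  | .app n m => .app n.toTm m.toTm
  | .unbox n e => .unbox n.toTm e
end

mutual
def wkNf : {Γ Δ : Cx} → W Γ Δ → Nf Γ A → Nf Δ A
  | _, _, w, .ne n => .ne (wkNe w n)
  | _, _, w, .lam n => .lam (wkNf (.keep w) n)
  | _, _, w, .box n => .box (wkNf (.lock w) n)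

def wkNe : {Γ Δ : Cx} → W Γ Δ → Ne Γ A → Ne Δ A
  | _, _, w, .var x => .var (wkVar w x)
  | _, _, w, .app n m => .app (wkNe w n) (wkNf w m)
  | _, _, w, .unbox n e =>
      let ⟨_, w', e'⟩ := factor w e; .unbox (wkNe w' n) e'
end

/-! ### Kripke semantics (Prop-valued NbE) -/

def Sem : Cx → Ty → Prop
  | Γ, .base => Nonempty (Nf Γ .base)
  | Γ, .arr A B => ∀ Δ, Nonempty (W Γ Δ) → Sem Δ A → Sem Δ B
  | Γ, .box A => ∀ Δ Θ, Nonempty (W Γ Δ) → Nonempty (Ext Δ Θ) → Sem Θ A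

theorem mono : ∀ (A : Ty) {Γ Δ : Cx}, Nonempty (W Γ Δ) → Sem Γ A → Sem Δ A
  | .base, _, _, ⟨w⟩, ⟨n⟩ => ⟨wkNf w n⟩
  | .arr _ _, _, _, ⟨w⟩, f => fun Θ hw a => f Θ (hw.elim fun w' => ⟨compW w w'⟩) a
  | .box _, _, _, ⟨w⟩, f => fun Δ' Θ hw he => f Δ' Θ (hw.elim fun w' => ⟨compW w w'⟩) he

mutual
theorem reflect : ∀ (A : Ty) {Γ : Cx}, Nonempty (Ne Γ A) → Sem Γ A
  | .base, _, ⟨n⟩ => ⟨.ne n⟩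
  | .arr A B, _, ⟨n⟩ => fun Δ hw a =>
      reflect B (hw.elim fun w => (reify A a).elim fun m => ⟨.app (wkNe w n) m⟩)
  | .box A, _, ⟨n⟩ => fun Δ Θ hw he =>
      reflect A (hw.elim fun w => he.elim fun e => ⟨.unbox (wkNe w n) e⟩)

theorem reify : ∀ (A : Ty) {Γ : Cx}, Sem Γ A → Nonempty (Nf Γ A)
  | .base, _, h => h
  | .arr A B, Γ, f =>
      (reify B (f (.snoc Γ A) ⟨.drop (idW Γ)⟩ (reflect A ⟨.var .zero⟩))).elim
        fun n => ⟨.lam n⟩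
  | .box A, Γ, f =>
      (reify A (f Γ (.lock Γ) ⟨idW Γ⟩ ⟨.nil⟩)).elim fun n => ⟨.box n⟩
end

/-! ### Environments and evaluation -/

def Env : Cx → Cx → Prop
  | .nil, _ => True
  | .snoc Γ A, Δ => Env Γ Δ ∧ Sem Δ A
  | .lock Γ, Δ => ∃ Θ, Env Γ Θ ∧ Nonempty (Ext Θ Δ)

theorem monoEnv : ∀ (Γ : Cx) {Δ Δ' : Cx}, Nonempty (W Δ Δ') → Env Γ Δ → Env Γ Δ'
  | .nil, _, _, _, _ => trivial
  | .snoc Γ A, _, _, hw, ⟨ρ, a⟩ => ⟨monoEnv Γ hw ρ, mono A hw a⟩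
  | .lock Γ, _, _, ⟨w⟩, ⟨Θ, ρ, ⟨e⟩⟩ =>
      ⟨(factor w e).1, monoEnv Γ ⟨(factor w e).2.1⟩ ρ, ⟨(factor w e).2.2⟩⟩

theorem lookup : ∀ {Γ : Cx} {A : Ty}, Var Γ A → ∀ {Δ : Cx}, Env Γ Δ → Sem Δ A
  | _, _, .zero, _, ρ => ρ.2
  | _, _, .succ x, _, ρ => lookup x ρ.1

theorem evalExt : ∀ {Θ Γ : Cx}, Ext Θ Γ → ∀ {Δ : Cx}, Env Γ Δ →
    ∃ Θ', Env Θ Θ' ∧ Nonempty (Ext Θ' Δ)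
  | _, _, .nil, _, ρ => ρ
  | _, _, .var e, _, ρ => evalExt e ρ.1

theorem eval : ∀ {Γ : Cx} {A : Ty}, Tm Γ A → ∀ {Δ : Cx}, Env Γ Δ → Sem Δ A
  | _, _, .var x, _, ρ => lookup x ρ
  | _, _, .lam t, _, ρ => fun Δ' hw a => eval t (Δ := Δ') ⟨monoEnv _ hw ρ, a⟩
  | _, _, .app t s, Δ, ρ => eval t ρ Δ ⟨idW Δ⟩ (eval s ρ)
  | _, _, .box t, _, ρ => fun Δ' Θ hw he => eval t (Δ := Θ) ⟨Δ', monoEnv _ hw ρ, he⟩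
  | _, _, .unbox t e, Δ, ρ =>
      (evalExt e ρ).elim fun Θ' h => eval t h.1 Θ' Δ ⟨idW Θ'⟩ h.2

/-! ### Removing the bottom-most lock from a normal form -/

/-- Prepend a lock at the bottom of a context. -/
def plug : Cx → Cx
  | .nil => .lock .nil
  | .snoc Γ A => .snoc (plug Γ) A
  | .lock Γ => .lock (plug Γ)

def varPlug : {Γ : Cx} → {A : Ty} → Var (plug Γ) A → Var Γ A
  | .snoc _ _, _, .zero => .zero
  | .snoc _ _, _, .succ x => .succ (varPlug x)

theorem extPlug : ∀ {Γ Δ : Cx}, Ext Δ (plug Γ) →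
    (∃ Δ', Δ = plug Δ' ∧ Nonempty (Ext Δ' Γ)) ∨ Δ = .nil := by
  intro Γ
  induction Γ with
  | nil =>
      intro Δ e; cases e; exact Or.inr rfl
  | snoc Γ B ih =>
      intro Δ e
      cases e with
      | var e =>
          rcases ih e with ⟨Δ', rfl, ⟨e'⟩⟩ | rfl
          · exact Or.inl ⟨Δ', rfl, ⟨.var e'⟩⟩
          · exact Or.inr rfl
  | lock Γ ih =>
      intro Δ e
      cases e
      exact Or.inl ⟨Γ, rfl, ⟨.nil⟩⟩

theorem neNilEmpty : ∀ {A : Ty}, Ne .nil A → False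
  | _, .var x => nomatch x
  | _, .app n _ => neNilEmpty n
  | _, .unbox _ e => nomatch e

mutual
theorem nfPlug : ∀ {Δ : Cx} {A : Ty}, Nf Δ A → ∀ {Γ : Cx}, Δ = plug Γ → Nonempty (Nf Γ A)
  | _, _, .ne n, _, h => (nePlug n h).elim fun n => ⟨.ne n⟩
  | _, _, .lam (A := A) n, Γ, h =>
      (nfPlug n (Γ := .snoc Γ A) (by rw [h]; rfl)).elim fun n => ⟨.lam n⟩
  | _, _, .box n, Γ, h =>
      (nfPlug n (Γ := .lock Γ) (by rw [h]; rfl)).elim fun n => ⟨.box n⟩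

theorem nePlug : ∀ {Δ : Cx} {A : Ty}, Ne Δ A → ∀ {Γ : Cx}, Δ = plug Γ → Nonempty (Ne Γ A)
  | _, _, .var x, _, h => ⟨.var (varPlug (h ▸ x))⟩
  | _, _, .app n m, _, h =>
      (nePlug n h).elim fun n => (nfPlug m h).elim fun m => ⟨.app n m⟩
  | _, _, .unbox n e, Γ, h => by
      subst h
      rcases extPlug e with ⟨Δ', hΔ, ⟨e'⟩⟩ | hΔ
      · exact (nePlug n hΔ).elim fun n => ⟨.unbox n e'⟩
      · exact (neNilEmpty (hΔ ▸ n)).elim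
end

/-- Denecessitation for IKC: for any type A there exists a term · ⊢ A
if and only if there exists a term · ⊢ □A. -/
theorem denecessitation (A : Ty) :
    Nonempty (Tm .nil A) ↔ Nonempty (Tm .nil (.box A)) := by
  constructor
  · rintro ⟨t⟩
    have h : Sem (.lock .nil) A := eval t (Δ := .lock .nil) trivial
    exact (reify A h).elim fun n => ⟨.box n.toTm⟩
  · rintro ⟨u⟩
    have h : Sem .nil (.box A) := eval u (Δ := .nil) trivial
    have h2 : Sem (.lock .nil) A := h .nil (.lock .nil) ⟨idW _⟩ ⟨.nil⟩
    have h3 : Nonempty (Nf (plug .nil) A) := reify A h2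
    exact h3.elim fun n => (nfPlug n rfl).elim fun n => ⟨n.toTm⟩

end IKC
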